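/- The Artin–Hasse exponential AH(T) = exp(∑_{n≥0} T^{p^n}/p^n) is a formal power series with coefficients in ℤ_p. -/

import Mathlib

open PowerSeries
open scoped Classical

/-!
Dwork's argument with E = exp(pX), whose coefficients pⁿ/n! (n ≥ 1) lie in pℤ_p.
Because X^(p-1)·∑ X^(p^(n+1)-p) + 1 = ∑ X^(pⁿ-1), both F^p and F(X^p)·E solve
W' = p·W·∑ X^(pⁿ-1) with W(0) = 1, so F^p = F(X^p)·E. Induct on the degree n: if the coefficients
of F below degree n are integral and P is the truncation of F below degree n, then the n-th
coefficient of F^p is that of P^p plus p·aₙ, while P^p ≡ P(X^p) mod p (Frobenius) and, in degree n,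
F(X^p)·E ≡ F(X^p) ≡ P(X^p) mod p. Hence p·aₙ ∈ pℤ_p.
-/

namespace PowerSeries

section CommRing

variable {R : Type*} [CommRing R]

theorem derivative_rescale (a : R) (f : R⟦X⟧) :
    d⁄dX R (rescale a f) = C a * rescale a (d⁄dX R f) := by
  ext n
  simp only [coeff_derivative, coeff_rescale, coeff_C_mul, pow_succ]
  ring

theorem derivative_expand (p : ℕ) (hp : p ≠ 0) (f : R⟦X⟧) :
    d⁄dX R (expand p hp f) = expand p hp (d⁄dX R f) * ((p : R⟦X⟧) * X ^ (p - 1)) := by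
  rw [expand_apply, expand_apply, derivative_subst (HasSubst.X_pow hp), derivative_pow,
    derivative_X, mul_one]

theorem derivative_pow_of_derivative_eq_mul {f h : R⟦X⟧} (hf : d⁄dX R f = f * h) (k : ℕ) :
    d⁄dX R (f ^ k) = f ^ k * (k * h) := by
  cases k with
  | zero => simp
  | succ k => rw [derivative_pow, hf]; push_cast; ring

theorem coeff_pow_sub_coeff_trunc_pow (f : R⟦X⟧) {n : ℕ} (hn : n ≠ 0) (k : ℕ) :
    coeff n (f ^ k) - coeff n ((trunc n f : R⟦X⟧) ^ k) =
      k * constantCoeff f ^ (k - 1) * coeff n f := by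
  set P : R⟦X⟧ := ↑(trunc n f)
  set D : R⟦X⟧ := mk fun i ↦ coeff (i + n) f
  have hfP : f - P = X ^ n * D := by
    conv_lhs => rw [eq_X_pow_mul_shift_add_trunc n f]
    ring
  have hP : constantCoeff P = constantCoeff f := by
    rw [← coeff_zero_eq_constantCoeff_apply, ← coeff_zero_eq_constantCoeff_apply,
      Polynomial.coeff_coe, coeff_trunc, if_pos (Nat.pos_of_ne_zero hn)]
  rw [← map_sub, ← geom_sum₂_mul, hfP, mul_left_comm, coeff_X_pow_mul', if_pos le_rfl,
    Nat.sub_self, coeff_zero_eq_constantCoeff_apply, map_mul, map_sum]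
  simp only [map_mul, map_pow, hP, geom_sum₂_self]
  simp [D]

end CommRing

theorem eq_of_derivative_eq_mul {K : Type*} [Field K] [CharZero K] {f g h : K⟦X⟧}
    (hf : d⁄dX K f = f * h) (hg : d⁄dX K g = g * h) (hg0 : constantCoeff g ≠ 0)
    (h0 : constantCoeff f = constantCoeff g) : f = g := by
  have hquot : f * g⁻¹ = 1 := by
    refine derivative.ext ?_ ?_
    · rw [Derivation.leibniz, derivative_inv', hf, hg, derivative_one, smul_eq_mul, smul_eq_mul]
      linear_combination (-(f * g⁻¹ * h)) * PowerSeries.inv_mul_cancel g hg0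
    · rw [map_mul, map_one, h0, PowerSeries.constantCoeff_inv, mul_inv_cancel₀ hg0]
  calc f = f * g⁻¹ * g := by rw [mul_assoc, PowerSeries.inv_mul_cancel g hg0, mul_one]
    _ = g := by rw [hquot, one_mul]

theorem norm_coeff_mul_le_of_forall_le {R : Type*} [NormedRing R] [IsUltrametricDist R]
    {f g : R⟦X⟧} {n : ℕ} {a b : ℝ} (hf : ∀ i ≤ n, ‖coeff i f‖ ≤ a)
    (hg : ∀ i ≤ n, ‖coeff i g‖ ≤ b) : ‖coeff n (f * g)‖ ≤ a * b := by
  have ha : 0 ≤ a := (norm_nonneg _).trans (hf 0 n.zero_le)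
  have hb : 0 ≤ b := (norm_nonneg _).trans (hg 0 n.zero_le)
  rw [coeff_mul]
  refine IsUltrametricDist.norm_sum_le_of_forall_le_of_nonneg (mul_nonneg ha hb) fun x hx ↦ ?_
  exact (norm_mul_le _ _).trans (mul_le_mul (hf _ (Finset.HasAntidiagonal.antidiagonal.fst_le hx))
    (hg _ (Finset.HasAntidiagonal.antidiagonal.snd_le hx)) (norm_nonneg _) ha)

theorem norm_coeff_expand_mul_sub_coeff_expand_le {R : Type*} [NormedCommRing R]
    [IsUltrametricDist R] {q : ℕ} (hq : q ≠ 0) {f g : R⟦X⟧} {n : ℕ} {r : ℝ}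
    (hf : ∀ i ≤ n / q, ‖coeff i f‖ ≤ 1) (hg : ∀ i ≤ n, ‖coeff i (g - 1)‖ ≤ r) :
    ‖coeff n (expand q hq f * g) - coeff n (expand q hq f)‖ ≤ r := by
  rw [← map_sub, ← mul_sub_one]
  refine (norm_coeff_mul_le_of_forall_le (fun i hi ↦ ?_) hg).trans_eq (one_mul r)
  rw [coeff_expand]
  split_ifs
  exacts [hf _ (Nat.div_le_div_right hi), by simp]

section ArtinHasse

variable (R : Type*) [CommRing R] (p : ℕ)

noncomputable def sumXPowPow : R⟦X⟧ := mk fun k ↦ if ∃ n : ℕ, k = p ^ n then 1 else 0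

noncomputable def artinHasseLogDeriv : R⟦X⟧ :=
  mk fun k ↦ if ∃ n : ℕ, k + 1 = p ^ n then 1 else 0

variable {R p}

theorem X_mul_artinHasseLogDeriv (hp : p ≠ 0) :
    X * artinHasseLogDeriv R p = sumXPowPow R p := by
  ext (_ | k)
  · simp [sumXPowPow, (pow_pos (Nat.pos_of_ne_zero hp) _).ne]
  · simp [sumXPowPow, artinHasseLogDeriv, coeff_succ_X_mul]

theorem expand_sumXPowPow_add_X (hp : 1 < p) :
    expand p (Nat.ne_zero_of_lt hp) (sumXPowPow R p) + X = sumXPowPow R p := by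
  ext k
  rw [map_add, coeff_expand, coeff_X, sumXPowPow, coeff_mk, coeff_mk]
  by_cases hk : k = 1
  · subst hk
    have hone : ∃ n, 1 = p ^ n := ⟨0, rfl⟩
    simp [Nat.dvd_one, hp.ne', hone]
  by_cases hdvd : p ∣ k
  · obtain ⟨m, rfl⟩ := hdvd
    have hpow : (∃ n, m = p ^ n) ↔ ∃ n, p * m = p ^ n := by
      constructor
      · rintro ⟨n, rfl⟩
        exact ⟨n + 1, by ring⟩
      · rintro ⟨_ | n, hn⟩
        · exact absurd (Nat.eq_one_of_mul_eq_one_right hn) hp.ne'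
        · exact ⟨n, Nat.eq_of_mul_eq_mul_left (Nat.zero_lt_of_lt hp) (by rw [hn]; ring)⟩
    simp [Nat.mul_div_cancel_left m (Nat.zero_lt_of_lt hp), hk, hpow]
  · have hpow : ¬ ∃ n, k = p ^ n := by
      rintro ⟨_ | n, rfl⟩
      · exact hk rfl
      · exact hdvd (dvd_pow_self p n.succ_ne_zero)
    simp [hdvd, hk, hpow]

theorem X_pow_mul_expand_artinHasseLogDeriv_add_one (hp : 1 < p) :
    X ^ (p - 1) * expand p (Nat.ne_zero_of_lt hp) (artinHasseLogDeriv R p) + 1 =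
      artinHasseLogDeriv R p := by
  apply X_mul_cancel
  rw [X_mul_artinHasseLogDeriv (Nat.ne_zero_of_lt hp), ← expand_sumXPowPow_add_X hp,
    ← X_mul_artinHasseLogDeriv (Nat.ne_zero_of_lt hp), map_mul, expand_X]
  have hXp : (X : R⟦X⟧) ^ p = X * X ^ (p - 1) := by
    rw [← pow_succ', Nat.sub_add_cancel hp.le]
  rw [hXp]
  ring

theorem derivative_expand_mul_rescale_exp [Algebra ℚ R] (hp : 1 < p) {F : R⟦X⟧}
    (hF : d⁄dX R F = F * artinHasseLogDeriv R p) :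
    d⁄dX R (expand p (Nat.ne_zero_of_lt hp) F * rescale (p : R) (exp R)) =
      expand p (Nat.ne_zero_of_lt hp) F * rescale (p : R) (exp R) *
        (p * artinHasseLogDeriv R p) := by
  rw [Derivation.leibniz, derivative_expand, derivative_rescale, derivative_exp, hF, map_mul,
    map_natCast, smul_eq_mul, smul_eq_mul]
  linear_combination (expand p (Nat.ne_zero_of_lt hp) F * rescale (p : R) (exp R) * p) *
    X_pow_mul_expand_artinHasseLogDeriv_add_one (R := R) hp

end ArtinHasse

end PowerSeries

theorem PadicInt.C_dvd_pow_sub_expand {p : ℕ} [Fact p.Prime] (Q : Polynomial ℤ_[p]) :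
    Polynomial.C (p : ℤ_[p]) ∣ Q ^ p - Polynomial.expand ℤ_[p] p Q := by
  rw [← Ideal.mem_span_singleton, ← Set.image_singleton, ← Ideal.map_span,
    ← PadicInt.maximalIdeal_eq_span_p, ← PadicInt.ker_toZMod, ← Polynomial.ker_mapRingHom,
    RingHom.mem_ker, Polynomial.coe_mapRingHom, Polynomial.map_sub, Polynomial.map_pow,
    Polynomial.map_expand, ZMod.expand_card, sub_self]

namespace Padic

variable {p : ℕ} [hp : Fact p.Prime]

theorem norm_coeff_pow_sub_coeff_expand_le {P : Polynomial ℚ_[p]}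
    (hP : ∀ i, ‖P.coeff i‖ ≤ 1) (n : ℕ) :
    ‖(P ^ p).coeff n - (Polynomial.expand ℚ_[p] p P).coeff n‖ ≤ (p : ℝ)⁻¹ := by
  obtain ⟨Q, rfl⟩ := (Polynomial.mem_lifts P).1 <|
    (Polynomial.lifts_iff_coeff_lifts (f := PadicInt.Coe.ringHom) P).2 fun i ↦ ⟨⟨_, hP i⟩, rfl⟩
  obtain ⟨S, hS⟩ := PadicInt.C_dvd_pow_sub_expand Q
  rw [← Polynomial.map_pow, ← Polynomial.map_expand, Polynomial.coeff_map, Polynomial.coeff_map,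
    ← map_sub, ← Polynomial.coeff_sub, hS, Polynomial.coeff_C_mul]
  change ‖((p * S.coeff n : ℤ_[p]) : ℚ_[p])‖ ≤ _
  rw [← PadicInt.norm_def, norm_mul, PadicInt.norm_p]
  exact mul_le_of_le_one_right (by positivity) (PadicInt.norm_le_one _)

theorem norm_coeff_rescale_exp_sub_one_le (n : ℕ) :
    ‖coeff n (rescale (p : ℚ_[p]) (exp ℚ_[p]) - 1)‖ ≤ (p : ℝ)⁻¹ := by
  rw [map_sub, coeff_rescale, coeff_exp, coeff_one]
  rcases eq_or_ne n 0 with rfl | hn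
  · simp
  have hp1 : (1 : ℝ) < p := by exact_mod_cast hp.out.one_lt
  have hv := padicValNat_factorial_lt_of_ne_zero p hn
  rw [if_neg hn, sub_zero, map_div₀, map_one, map_natCast, norm_mul, Padic.norm_p_pow, norm_div,
    norm_one, Padic.norm_eq_zpow_neg_valuation (Nat.cast_ne_zero.2 n.factorial_ne_zero),
    Padic.valuation_natCast, one_div, ← zpow_neg, neg_neg, ← zpow_add₀ (by positivity),
    ← zpow_neg_one]
  exact zpow_le_zpow_right₀ hp1.le (by omega)

theorem norm_coeff_le_one_of_pow_eq_expand_mul {F E : ℚ_[p]⟦X⟧} (hF : constantCoeff F = 1)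
    (hE : ∀ n, ‖coeff n (E - 1)‖ ≤ (p : ℝ)⁻¹) (h : F ^ p = expand p hp.out.ne_zero F * E)
    (n : ℕ) : ‖coeff n F‖ ≤ 1 := by
  induction n using Nat.strong_induction_on with
  | _ n ih =>
  rcases eq_or_ne n 0 with rfl | hn
  · simp [hF]
  have hdiv : ∀ i ≤ n, i / p < n := fun i hi ↦
    (Nat.div_lt_self (Nat.pos_of_ne_zero hn) hp.out.one_lt).trans_le' (Nat.div_le_div_right hi)
  set P := trunc n F
  have hP : ∀ i, ‖P.coeff i‖ ≤ 1 := by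
    intro i
    rw [coeff_trunc]
    split_ifs with hi
    exacts [ih i hi, by simp]
  have hexpand : (Polynomial.expand ℚ_[p] p P).coeff n = coeff n (expand p hp.out.ne_zero F) := by
    rw [Polynomial.coeff_expand hp.out.pos, coeff_expand, coeff_trunc, if_pos (hdiv n le_rfl)]
  have hE' := norm_coeff_expand_mul_sub_coeff_expand_le hp.out.ne_zero
    (fun i hi ↦ ih i ((hdiv n le_rfl).trans_le' hi)) fun i _ ↦ hE i
  have hsplit := coeff_pow_sub_coeff_trunc_pow F hn p
  rw [hF, one_pow, mul_one, ← Polynomial.coe_pow, Polynomial.coeff_coe] at hsplit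
  have hpa : (p : ℚ_[p]) * coeff n F =
      (coeff n (expand p hp.out.ne_zero F * E) - coeff n (expand p hp.out.ne_zero F)) +
        ((Polynomial.expand ℚ_[p] p P).coeff n - (P ^ p).coeff n) := by
    rw [← h, hexpand]
    linear_combination -hsplit
  have hnorm : ‖(p : ℚ_[p]) * coeff n F‖ ≤ (p : ℝ)⁻¹ := by
    rw [hpa]
    refine (IsUltrametricDist.norm_add_le_max _ _).trans (max_le hE' ?_)
    rw [norm_sub_rev]
    exact norm_coeff_pow_sub_coeff_expand_le hP n
  rw [norm_mul, Padic.norm_p] at hnorm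
  exact (mul_le_iff_le_one_right (inv_pos.2 (Nat.cast_pos.2 hp.out.pos))).1 hnorm

end Padic

/-- The Artin–Hasse exponential AH(T) = exp(∑_{n≥0} T^{p^n}/p^n) has all its coefficients
in ℤ_p.  The series AH is characterized among power series over ℚ_p as the unique F with
constant coefficient 1 whose logarithmic derivative is ∑_{n≥0} T^{p^n - 1}, i.e.
F' = F · ∑_{n≥0} T^{p^n - 1}; the claim is that any such F has p-adically integral
coefficients. -/
theorem artin_hasse_coefficients_are_padic_integers
    (p : ℕ) [Fact p.Prime]
    (F : PowerSeries ℚ_[p])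
    (hconst : PowerSeries.constantCoeff F = 1)
    (hderiv : d⁄dX ℚ_[p] F =
      F * PowerSeries.mk (fun k => if ∃ n : ℕ, k + 1 = p ^ n then (1 : ℚ_[p]) else 0)) :
    ∀ k : ℕ, ‖PowerSeries.coeff k F‖ ≤ 1 := by
  have hp : 1 < p := (Fact.out : p.Prime).one_lt
  set E := rescale (p : ℚ_[p]) (exp ℚ_[p])
  have hE0 : constantCoeff E = 1 := by
    rw [← coeff_zero_eq_constantCoeff_apply, coeff_rescale, coeff_exp]
    simp
  have hFp : F ^ p = expand p (Nat.ne_zero_of_lt hp) F * E := by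
    refine eq_of_derivative_eq_mul (derivative_pow_of_derivative_eq_mul hderiv p)
      (derivative_expand_mul_rescale_exp hp hderiv) ?_ ?_ <;> simp [hE0, hconst]
  exact Padic.norm_coeff_le_one_of_pow_eq_expand_mul hconst
    Padic.norm_coeff_rescale_exp_sub_one_le hFp
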